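/- arXiv:1209.5025 — 2 statements merged into one kernel-verified Lean document; each statement's English description precedes it below -/
import Mathlib

section
/- For every positive integer n, the central binomial coefficient satisfies C(2n, n) ≤ 2^(2n) / √(2n). -/
lemma aux_central (n : ℕ) :
    Nat.centralBinom n ^ 2 * (3 * n + 1) ≤ 16 ^ n := by
  induction n with
  | zero => simp [Nat.centralBinom]
  | succ n ih =>
    set a := Nat.centralBinom n with ha
    set b := Nat.centralBinom (n + 1) with hb
    have key : (n + 1) * b = 2 * (2 * n + 1) * a := Nat.succ_mul_centralBinom_succ n
    have poly : 4 * (2 * n + 1) ^ 2 * (3 * n + 4) ≤ 16 * (3 * n + 1) * (n + 1) ^ 2 := by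
      nlinarith
    have h2 : (3 * n + 1) * (n + 1) ^ 2 * (b ^ 2 * (3 * (n + 1) + 1)) ≤
        (3 * n + 1) * (n + 1) ^ 2 * 16 ^ (n + 1) := by
      calc (3 * n + 1) * (n + 1) ^ 2 * (b ^ 2 * (3 * (n + 1) + 1))
          = (3 * n + 4) * ((n + 1) * b) ^ 2 * (3 * n + 1) := by ring
        _ = (3 * n + 4) * (2 * (2 * n + 1) * a) ^ 2 * (3 * n + 1) := by rw [key]
        _ = 4 * (2 * n + 1) ^ 2 * (3 * n + 4) * (a ^ 2 * (3 * n + 1)) := by ring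
        _ ≤ 4 * (2 * n + 1) ^ 2 * (3 * n + 4) * 16 ^ n := by
            exact Nat.mul_le_mul_left _ ih
        _ ≤ 16 * (3 * n + 1) * (n + 1) ^ 2 * 16 ^ n := Nat.mul_le_mul_right _ poly
        _ = (3 * n + 1) * (n + 1) ^ 2 * 16 ^ (n + 1) := by ring
    exact Nat.le_of_mul_le_mul_left h2 (by positivity)

theorem central_binom_le (n : ℕ) (hn : 0 < n) :
    ((2 * n).choose n : ℝ) ≤ 2 ^ (2 * n) / Real.sqrt (2 * n) := by
  have hC : (2 * n).choose n = Nat.centralBinom n := rfl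
  have hnat : Nat.centralBinom n ^ 2 * (2 * n) ≤ 16 ^ n := by
    calc Nat.centralBinom n ^ 2 * (2 * n) ≤ Nat.centralBinom n ^ 2 * (3 * n + 1) :=
          Nat.mul_le_mul_left _ (by omega)
      _ ≤ 16 ^ n := aux_central n
  have hreal : ((2 * n).choose n : ℝ) ^ 2 * (2 * n) ≤ (2 ^ (2 * n)) ^ 2 := by
    have := hnat
    have h16 : ((16 : ℕ) ^ n : ℝ) = ((2 : ℝ) ^ (2 * n)) ^ 2 := by
      push_cast
      rw [← pow_mul, show 2 * n * 2 = 4 * n by ring, pow_mul]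
      norm_num
    calc ((2 * n).choose n : ℝ) ^ 2 * (2 * n)
        = ((Nat.centralBinom n ^ 2 * (2 * n) : ℕ) : ℝ) := by rw [hC]; push_cast; ring
      _ ≤ ((16 ^ n : ℕ) : ℝ) := by exact_mod_cast hnat
      _ = (2 ^ (2 * n)) ^ 2 := by rw [← h16]; push_cast; ring
  have hs : (0 : ℝ) < Real.sqrt (2 * n) := Real.sqrt_pos.2 (by positivity)
  rw [le_div_iff₀ hs]
  have hnn : (0 : ℝ) ≤ ((2 * n).choose n : ℝ) := by positivity
  have heq : Real.sqrt (((2 * n).choose n : ℝ) ^ 2 * (2 * n)) =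
      ((2 * n).choose n : ℝ) * Real.sqrt (2 * n) := by
    rw [Real.sqrt_mul (sq_nonneg _), Real.sqrt_sq hnn]
  rw [← heq]
  calc Real.sqrt (((2 * n).choose n : ℝ) ^ 2 * (2 * n))
      ≤ Real.sqrt ((2 ^ (2 * n)) ^ 2) := Real.sqrt_le_sqrt hreal
    _ = 2 ^ (2 * n) := Real.sqrt_sq (by positivity)
end

section
/- For any positive integer ν ≥ 2 and any real α with 0 < α < 1/2, the probability that a Binomial(2ν, α) random variable is at least ν is at most (1/2)(1 + 1/√(2ν))·(4α(1-α))^ν. -/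
lemma central_sq_le (n : ℕ) : (2 * n + 1) * (Nat.centralBinom n) ^ 2 ≤ 16 ^ n := by
  induction n with
  | zero => simp [Nat.centralBinom]
  | succ n ih =>
    have key : (n + 1) * Nat.centralBinom (n + 1)
        = 2 * (2 * n + 1) * Nat.centralBinom n := Nat.succ_mul_centralBinom_succ n
    have h1 : (n + 1) ^ 2 * ((2 * (n + 1) + 1) * (Nat.centralBinom (n + 1)) ^ 2)
        ≤ (n + 1) ^ 2 * 16 ^ (n + 1) := by
      have e : (n + 1) ^ 2 * ((2 * (n + 1) + 1) * (Nat.centralBinom (n + 1)) ^ 2)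
          = (2 * (n + 1) + 1) * ((n + 1) * Nat.centralBinom (n + 1)) ^ 2 := by ring
      rw [e, key]
      have e2 : (2 * (n + 1) + 1) * (2 * (2 * n + 1) * Nat.centralBinom n) ^ 2
          = 4 * ((2 * n + 3) * (2 * n + 1)) * ((2 * n + 1) * (Nat.centralBinom n) ^ 2) := by
        ring
      rw [e2]
      calc 4 * ((2 * n + 3) * (2 * n + 1)) * ((2 * n + 1) * (Nat.centralBinom n) ^ 2)
          ≤ 4 * ((2 * n + 3) * (2 * n + 1)) * 16 ^ n :=
            Nat.mul_le_mul_left _ ih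
        _ ≤ (n + 1) ^ 2 * 16 ^ (n + 1) := by
            have : 4 * ((2 * n + 3) * (2 * n + 1)) ≤ (n + 1) ^ 2 * 16 := by nlinarith
            calc 4 * ((2 * n + 3) * (2 * n + 1)) * 16 ^ n
                ≤ (n + 1) ^ 2 * 16 * 16 ^ n := Nat.mul_le_mul_right _ this
              _ = (n + 1) ^ 2 * 16 ^ (n + 1) := by ring
    exact Nat.le_of_mul_le_mul_left h1 (by positivity)

lemma sum_upper_half (ν : ℕ) :
    2 * ∑ i ∈ Finset.Icc ν (2 * ν), (2 * ν).choose i = 4 ^ ν + (2 * ν).choose ν := by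
  have htot : ∑ i ∈ Finset.range (2 * ν + 1), (2 * ν).choose i = 4 ^ ν := by
    rw [Nat.sum_range_choose, pow_mul]
    norm_num
  have hsplit : (∑ i ∈ Finset.Ico 0 ν, (2 * ν).choose i)
      + ∑ i ∈ Finset.Ico ν (2 * ν + 1), (2 * ν).choose i = 4 ^ ν := by
    rw [Finset.sum_Ico_consecutive _ (Nat.zero_le ν) (by omega)]
    rw [← Finset.range_eq_Ico] at *
    exact htot
  have hrefl : ∑ i ∈ Finset.Ico 0 ν, (2 * ν).choose i
      = ∑ i ∈ Finset.Ico (ν + 1) (2 * ν + 1), (2 * ν).choose i := by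
    apply Finset.sum_nbij' (fun i => 2 * ν - i) (fun j => 2 * ν - j)
    · intro a ha
      simp only [Finset.mem_Ico] at *
      omega
    · intro a ha
      simp only [Finset.mem_Ico] at *
      omega
    · intro a ha
      simp only [Finset.mem_Ico] at ha
      omega
    · intro a ha
      simp only [Finset.mem_Ico] at ha
      omega
    · intro a ha
      simp only [Finset.mem_Ico] at ha
      exact (Nat.choose_symm (by omega)).symm
  have hIcc : Finset.Icc ν (2 * ν) = Finset.Ico ν (2 * ν + 1) := by
    rw [Finset.Ico_add_one_right_eq_Icc]
  have hsplit2 : ∑ i ∈ Finset.Ico ν (2 * ν + 1), (2 * ν).choose i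
      = (2 * ν).choose ν + ∑ i ∈ Finset.Ico (ν + 1) (2 * ν + 1), (2 * ν).choose i := by
    rw [Finset.sum_eq_sum_Ico_succ_bot (by omega)]
  rw [hIcc]
  omega

theorem binomial_tail_bound (ν : ℕ) (hν : 2 ≤ ν) (α : ℝ) (hα0 : 0 < α) (hα : α < 1/2) :
    ∑ i ∈ Finset.Icc ν (2 * ν), ((2 * ν).choose i : ℝ) * α ^ i * (1 - α) ^ (2 * ν - i)
      ≤ (1/2) * (1 + 1 / Real.sqrt (2 * ν)) * (4 * α * (1 - α)) ^ ν := by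
  have h1α : (0:ℝ) < 1 - α := by linarith
  have hαle : α ≤ 1 - α := by linarith
  -- Step 1: termwise bound
  have step1 : ∑ i ∈ Finset.Icc ν (2 * ν), ((2 * ν).choose i : ℝ) * α ^ i * (1 - α) ^ (2 * ν - i)
      ≤ ∑ i ∈ Finset.Icc ν (2 * ν), ((2 * ν).choose i : ℝ) * (α ^ ν * (1 - α) ^ ν) := by
    apply Finset.sum_le_sum
    intro i hi
    simp only [Finset.mem_Icc] at hi
    rw [mul_assoc]
    apply mul_le_mul_of_nonneg_left _ (by positivity)
    have hpow : α ^ i = α ^ ν * α ^ (i - ν) := by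
      rw [← pow_add]; congr 1; omega
    rw [hpow, mul_assoc]
    apply mul_le_mul_of_nonneg_left _ (by positivity)
    calc α ^ (i - ν) * (1 - α) ^ (2 * ν - i)
        ≤ (1 - α) ^ (i - ν) * (1 - α) ^ (2 * ν - i) := by
          apply mul_le_mul_of_nonneg_right _ (by positivity)
          exact pow_le_pow_left₀ hα0.le hαle _
      _ = (1 - α) ^ ν := by
          rw [← pow_add]
          congr 1
          omega
  -- Step 2: sum of binomial coefficients
  have hcb : ((2 * ν).choose ν : ℝ) ≤ 4 ^ ν / Real.sqrt (2 * ν) := by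
    have hsq : Real.sqrt (2 * ν) * ((2 * ν).choose ν : ℝ) ≤ 4 ^ ν := by
      have hnat : 2 * ν * ((2 * ν).choose ν) ^ 2 ≤ 16 ^ ν := by
        have h := central_sq_le ν
        rw [Nat.centralBinom_eq_two_mul_choose] at h
        calc 2 * ν * ((2 * ν).choose ν) ^ 2 ≤ (2 * ν + 1) * ((2 * ν).choose ν) ^ 2 :=
            Nat.mul_le_mul_right _ (by omega)
          _ ≤ 16 ^ ν := h
      have hreal : (2 * ν : ℝ) * ((2 * ν).choose ν : ℝ) ^ 2 ≤ (4 ^ ν) ^ 2 := by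
        have : ((2 * ν * ((2 * ν).choose ν) ^ 2 : ℕ) : ℝ) ≤ ((16 ^ ν : ℕ) : ℝ) := by
          exact_mod_cast hnat
        push_cast at this
        calc (2 * ν : ℝ) * ((2 * ν).choose ν : ℝ) ^ 2 ≤ 16 ^ ν := this
          _ = (4 ^ ν) ^ 2 := by
              rw [show (16:ℝ) = 4 ^ 2 by norm_num, ← pow_mul, ← pow_mul, Nat.mul_comm]
      have h0 : (0:ℝ) ≤ Real.sqrt (2 * ν) * ((2 * ν).choose ν : ℝ) := by positivity
      have h4 : (0:ℝ) ≤ (4:ℝ) ^ ν := by positivity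
      have hsq2 : (Real.sqrt (2 * ν) * ((2 * ν).choose ν : ℝ)) ^ 2 ≤ ((4:ℝ) ^ ν) ^ 2 := by
        rw [mul_pow, Real.sq_sqrt (by positivity)]
        exact hreal
      exact (pow_le_pow_iff_left₀ h0 h4 (by norm_num)).mp hsq2
    rw [le_div_iff₀ (by positivity : (0:ℝ) < Real.sqrt (2 * ν))]
    rw [mul_comm] at hsq
    exact hsq
  have hsum : (∑ i ∈ Finset.Icc ν (2 * ν), ((2 * ν).choose i : ℝ))
      = ((4:ℝ) ^ ν + ((2 * ν).choose ν : ℝ)) / 2 := by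
    have h := sum_upper_half ν
    have h' : (2:ℝ) * ∑ i ∈ Finset.Icc ν (2 * ν), ((2 * ν).choose i : ℝ)
        = 4 ^ ν + ((2 * ν).choose ν : ℝ) := by exact_mod_cast h
    linarith
  calc ∑ i ∈ Finset.Icc ν (2 * ν), ((2 * ν).choose i : ℝ) * α ^ i * (1 - α) ^ (2 * ν - i)
      ≤ ∑ i ∈ Finset.Icc ν (2 * ν), ((2 * ν).choose i : ℝ) * (α ^ ν * (1 - α) ^ ν) := step1
    _ = (∑ i ∈ Finset.Icc ν (2 * ν), ((2 * ν).choose i : ℝ)) * (α ^ ν * (1 - α) ^ ν) := by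
        rw [Finset.sum_mul]
    _ ≤ (((4:ℝ) ^ ν + 4 ^ ν / Real.sqrt (2 * ν)) / 2) * (α ^ ν * (1 - α) ^ ν) := by
        apply mul_le_mul_of_nonneg_right _ (by positivity)
        rw [hsum]
        linarith [hcb]
    _ = (1/2) * (1 + 1 / Real.sqrt (2 * ν)) * (4 * α * (1 - α)) ^ ν := by
        have hs : Real.sqrt (2 * ν) ≠ 0 := by positivity
        rw [mul_pow, mul_pow]
        field_simp
end
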